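/- (Fixed point iff stationary point) Let C be a box, H̃ = V T Vᵀ + c U Uᵀ symmetric positive definite with V having orthonormal columns whose first column is ∇f(x*)/‖∇f(x*)‖₂ (if ∇f(x*) ≠ 0), and μ* > 0. Then x* ∈ C satisfies x* = Π_{H̃}(x* − μ* V T⁻¹ Vᵀ ∇f(x*)) if and only if ∇f(x*)ᵀ(z − x*) ≥ 0 for all z ∈ C, i.e., x* is a stationary point of the bound-constrained problem min_{x∈C} f(x). (If ∇f(x*) = 0 both conditions hold trivially.) -/

import Mathlib

/-!
The point `y = x* - μ V T⁻¹ Vᵀ g` is built so that `H̃ (x* - y) = μ g`: the `c U Uᵀ` part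
of `H̃` annihilates the range of `V`, the `V T Vᵀ` part inverts `V T⁻¹ Vᵀ` on it, and `g` lies
in that range because it is a multiple of the first column of `V`. The optimality condition for the
`H̃`-projection of `y` onto the convex box `C` is the variational inequality
`(H̃ (x* - y))ᵀ (z - x*) ≥ 0` on `C`, which then reads `μ gᵀ (z - x*) ≥ 0`.
-/

open Matrix Filter Topology Set

lemma nonneg_of_forall_add_mul_nonneg {a b : ℝ} (h : ∀ t ∈ Ioc (0 : ℝ) 1, 0 ≤ a + t * b) :
    0 ≤ a := by
  have hlim : Tendsto (fun t : ℝ => a + t * b) (𝓝[>] 0) (𝓝 a) := by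
    have : Continuous fun t : ℝ => a + t * b := by fun_prop
    simpa using (this.tendsto 0).mono_left nhdsWithin_le_nhds
  exact ge_of_tendsto hlim (eventually_of_mem (Ioc_mem_nhdsGT zero_lt_one) h)

section QuadraticForm

variable {n : Type*} [Fintype n] {H : Matrix n n ℝ}

lemma dotProduct_mulVec_add_add (hH : H.IsSymm) (u w : n → ℝ) :
    (u + w) ⬝ᵥ H *ᵥ (u + w) =
      u ⬝ᵥ H *ᵥ u + 2 * ((H *ᵥ u) ⬝ᵥ w) + w ⬝ᵥ H *ᵥ w := by
  have hleft : u ⬝ᵥ H *ᵥ w = (H *ᵥ u) ⬝ᵥ w := by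
    rw [dotProduct_mulVec, ← vecMul_transpose, hH.eq]
  rw [mulVec_add, dotProduct_add, add_dotProduct, add_dotProduct, hleft,
    dotProduct_comm w (H *ᵥ u)]
  ring

theorem forall_quadForm_sub_le_iff {C : Set (n → ℝ)} (hH : H.PosSemidef)
    (hC : Convex ℝ C) {x y : n → ℝ} (hx : x ∈ C) :
    (∀ z ∈ C, (x - y) ⬝ᵥ H *ᵥ (x - y) ≤ (z - y) ⬝ᵥ H *ᵥ (z - y)) ↔
      ∀ z ∈ C, 0 ≤ (H *ᵥ (x - y)) ⬝ᵥ (z - x) := by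
  have hsymm : H.IsSymm := hH.isHermitian
  have hquad (w : n → ℝ) : 0 ≤ w ⬝ᵥ H *ᵥ w := by simpa using hH.dotProduct_mulVec_nonneg w
  have hexp (z : n → ℝ) : (z - y) ⬝ᵥ H *ᵥ (z - y) = (x - y) ⬝ᵥ H *ᵥ (x - y)
      + 2 * ((H *ᵥ (x - y)) ⬝ᵥ (z - x)) + (z - x) ⬝ᵥ H *ᵥ (z - x) := by
    rw [← dotProduct_mulVec_add_add hsymm, sub_add_sub_cancel']
  constructor
  · intro hmin z hz
    refine nonneg_of_forall_add_mul_nonneg (b := ((z - x) ⬝ᵥ H *ᵥ (z - x)) / 2)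
      fun t ht => ?_
    have hzt : x + t • (z - x) ∈ C := by
      simpa using hC.add_smul_sub_mem hx hz ⟨ht.1.le, ht.2⟩
    have h := hmin _ hzt
    rw [hexp (x + t • (z - x)), add_sub_cancel_left, dotProduct_smul, smul_dotProduct,
      mulVec_smul, dotProduct_smul, smul_eq_mul, smul_eq_mul, smul_eq_mul] at h
    nlinarith [ht.1]
  · intro hvi z hz
    rw [hexp z]
    linarith [hvi z hz, hquad (z - x)]

end QuadraticForm

section Isometry

variable {m n : Type*} [Fintype m] [Fintype n] [DecidableEq n] {V : Matrix m n ℝ}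

lemma mul_transpose_mulVec_mulVec (hV : Vᵀ * V = 1) (w : n → ℝ) :
    (V * Vᵀ) *ᵥ (V *ᵥ w) = V *ᵥ w := by
  rw [mulVec_mulVec, Matrix.mul_assoc, hV, Matrix.mul_one]

lemma mul_mul_transpose_mul_mul_inv_mul_transpose (hV : Vᵀ * V = 1) {T : Matrix n n ℝ}
    (hT : IsUnit T.det) : V * T * Vᵀ * (V * T⁻¹ * Vᵀ) = V * Vᵀ := by
  calc V * T * Vᵀ * (V * T⁻¹ * Vᵀ) = V * T * (Vᵀ * V) * T⁻¹ * Vᵀ := by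
        simp only [Matrix.mul_assoc]
    _ = V * Vᵀ := by rw [hV, Matrix.mul_one, Matrix.mul_assoc V, mul_nonsing_inv _ hT,
        Matrix.mul_one]

lemma one_sub_mul_transpose_mul [DecidableEq m] (hV : Vᵀ * V = 1) : (1 - V * Vᵀ) * V = 0 := by
  rw [Matrix.sub_mul, Matrix.one_mul, Matrix.mul_assoc, hV, Matrix.mul_one, sub_self]

end Isometry

lemma eq_mulVec_single_of_col_eq {m n : Type*} [Fintype m] [Fintype n] [DecidableEq n]
    {g : m → ℝ} (hg : g ≠ 0) {V : Matrix m n ℝ} {j : n}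
    (hcol : ∀ i, V i j = g i / √(g ⬝ᵥ g)) : g = V *ᵥ Pi.single j √(g ⬝ᵥ g) := by
  have hnorm : √(g ⬝ᵥ g) ≠ 0 := by
    rw [Real.sqrt_ne_zero']
    exact lt_of_le_of_ne (Finset.sum_nonneg fun i _ => mul_self_nonneg (g i))
      (Ne.symm (dotProduct_self_eq_zero.not.mpr hg))
  funext i
  simp [mulVec_single, hcol i, hnorm]

theorem stmt6_general {n l : ℕ} (hl : 0 < l)
    (V : Matrix (Fin n) (Fin l) ℝ) (hV : Vᵀ * V = 1)
    (T : Matrix (Fin l) (Fin l) ℝ) (hT : T.PosDef)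
    (U : Matrix (Fin n) (Fin (n - l)) ℝ) (hU : U * Uᵀ = 1 - V * Vᵀ)
    (c : ℝ)
    (Ht : Matrix (Fin n) (Fin n) ℝ) (hHt : Ht = V * T * Vᵀ + c • (U * Uᵀ))
    (hHtpd : Ht.PosDef)
    (lo hi : Fin n → ℝ) (C : Set (Fin n → ℝ))
    (hC : C = {v : Fin n → ℝ | ∀ i, lo i ≤ v i ∧ v i ≤ hi i})
    (xs : Fin n → ℝ) (hxs : xs ∈ C)
    (g : Fin n → ℝ)
    (hcol : g ≠ 0 → ∀ i, V i ⟨0, hl⟩ = g i / Real.sqrt (g ⬝ᵥ g))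
    (μ : ℝ) (hμ : 0 < μ)
    (y : Fin n → ℝ) (hy : y = xs - μ • ((V * T⁻¹ * Vᵀ) *ᵥ g)) :
    (∀ z ∈ C, (xs - y) ⬝ᵥ Ht *ᵥ (xs - y) ≤ (z - y) ⬝ᵥ Ht *ᵥ (z - y)) ↔
      (∀ z ∈ C, 0 ≤ g ⬝ᵥ (z - xs)) := by
  have hbox : C = Icc lo hi := by
    ext v
    simp [hC, Pi.le_def, forall_and]
  have hconv : Convex ℝ C := hbox ▸ convex_Icc lo hi
  have hg_range : (V * Vᵀ) *ᵥ g = g := by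
    by_cases hg0 : g = 0
    · simp [hg0]
    · rw [eq_mulVec_single_of_col_eq hg0 (hcol hg0), mul_transpose_mulVec_mulVec hV]
  have hHt_inv : Ht * (V * T⁻¹ * Vᵀ) = V * Vᵀ := by
    have hdet : IsUnit T.det := isUnit_iff_ne_zero.mpr hT.det_pos.ne'
    rw [hHt, hU, Matrix.add_mul, Matrix.smul_mul,
      mul_mul_transpose_mul_mul_inv_mul_transpose hV hdet, ← Matrix.mul_assoc, ← Matrix.mul_assoc,
      one_sub_mul_transpose_mul hV, Matrix.zero_mul, Matrix.zero_mul, smul_zero, add_zero]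
  have hHt_step : Ht *ᵥ (xs - y) = μ • g := by
    rw [hy, sub_sub_cancel, mulVec_smul, mulVec_mulVec, hHt_inv, hg_range]
  rw [forall_quadForm_sub_le_iff hHtpd.posSemidef hconv hxs, hHt_step]
  simp only [smul_dotProduct, smul_eq_mul, mul_nonneg_iff_of_pos_left hμ]

/-- Fixed point iff stationary point: `x* ∈ C` is a fixed point of the PNKH-B map
`x ↦ Π_{H̃}(x - μ V T⁻¹ Vᵀ ∇f(x))` (projection in the `H̃`-metric onto the box `C`)
if and only if `∇f(x*)ᵀ (z - x*) ≥ 0` for all `z ∈ C`, i.e. `x*` is a stationary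
point of the bound-constrained problem. -/
theorem stmt6 {n l : ℕ} (hl : 0 < l)
    (V : Matrix (Fin n) (Fin l) ℝ) (hV : Vᵀ * V = 1)
    (T : Matrix (Fin l) (Fin l) ℝ) (hT : T.PosDef)
    (U : Matrix (Fin n) (Fin (n - l)) ℝ) (hU : U * Uᵀ = 1 - V * Vᵀ)
    (c : ℝ) (hc : 0 < c)
    (Ht : Matrix (Fin n) (Fin n) ℝ) (hHt : Ht = V * T * Vᵀ + c • (U * Uᵀ))
    (hHtpd : Ht.PosDef)
    (lo hi : Fin n → ℝ) (C : Set (Fin n → ℝ))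
    (hC : C = {v : Fin n → ℝ | ∀ i, lo i ≤ v i ∧ v i ≤ hi i})
    (f : (Fin n → ℝ) → ℝ) (xs : Fin n → ℝ) (hxs : xs ∈ C)
    (g : Fin n → ℝ) (hg : HasGradientAt (fun v : EuclideanSpace ℝ (Fin n) => f v) (WithLp.toLp 2 g) (WithLp.toLp 2 xs))
    (hcol : g ≠ 0 → ∀ i, V i ⟨0, hl⟩ = g i / Real.sqrt (g ⬝ᵥ g))
    (μ : ℝ) (hμ : 0 < μ)
    (y : Fin n → ℝ) (hy : y = xs - μ • ((V * T⁻¹ * Vᵀ) *ᵥ g)) :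
    (∀ z ∈ C, (xs - y) ⬝ᵥ Ht *ᵥ (xs - y) ≤ (z - y) ⬝ᵥ Ht *ᵥ (z - y)) ↔
      (∀ z ∈ C, 0 ≤ g ⬝ᵥ (z - xs)) :=
  stmt6_general hl V hV T hT U hU c Ht hHt hHtpd lo hi C hC xs hxs g hcol μ hμ y hy
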